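/- arXiv:1003.5747 — 3 statements merged into one kernel-verified Lean document; each statement's English description precedes it below -/
import Mathlib

section
/- For all real numbers u and v, |u - v| ≤ |e^{iu} - e^{iv}| + |u - v|^{3/2}. -/
/-!
The chord `‖e^{it} - 1‖ = 2 |sin (t/2)|` differs from the arc `|t|` by at most `|t|³/24`.
For `|t| ≤ 1` this cubic error is below `|t|^{3/2}`; for `|t| ≥ 1` already `|t| ≤ |t|^{3/2}`.
-/

open Complex

lemma norm_cexp_I_mul_sub_cexp_I_mul (u v : ℝ) :
    ‖exp (I * u) - exp (I * v)‖ = ‖exp (I * ↑(u - v)) - 1‖ := by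
  have h : exp (I * u) - exp (I * v) = exp (I * v) * (exp (I * ↑(u - v)) - 1) := by
    rw [mul_sub, ← exp_add]
    push_cast
    ring_nf
  rw [h, norm_mul, mul_comm I, norm_exp_ofReal_mul_I, one_mul]

lemma abs_le_norm_cexp_I_mul_sub_one_add (t : ℝ) :
    |t| ≤ ‖exp (I * t) - 1‖ + |t| ^ 3 / 24 := by
  have hsin : |t - 2 * Real.sin (t / 2)| ≤ |t| ^ 3 / 24 := by
    have h := Real.abs_sub_sin_le (t / 2)
    rw [abs_div, abs_two] at h
    calc |t - 2 * Real.sin (t / 2)| = 2 * |t / 2 - Real.sin (t / 2)| := by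
          rw [← abs_two, ← abs_mul, abs_two]; ring_nf
      _ ≤ |t| ^ 3 / 24 := by linarith
  rw [norm_exp_I_mul_ofReal_sub_one, Real.norm_eq_abs]
  linarith [abs_sub_abs_le_abs_sub t (2 * Real.sin (t / 2))]

lemma min_self_pow_three_le_rpow_three_halves {x : ℝ} (hx : 0 ≤ x) :
    min x (x ^ 3) ≤ x ^ ((3 : ℝ) / 2) := by
  rcases le_total x 1 with hx1 | hx1
  · calc min x (x ^ 3) ≤ x ^ 3 := min_le_right _ _
      _ = x ^ (3 : ℝ) := (Real.rpow_natCast x 3).symm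
      _ ≤ x ^ ((3 : ℝ) / 2) := Real.rpow_le_rpow_of_exponent_ge' hx hx1 (by norm_num) (by norm_num)
  · exact (min_le_left _ _).trans (Real.self_le_rpow_of_one_le hx1 (by norm_num))

theorem abs_sub_le_abs_cexp_sub_add (u v : ℝ) :
    |u - v| ≤ ‖Complex.exp (Complex.I * u) - Complex.exp (Complex.I * v)‖
      + |u - v| ^ ((3 : ℝ) / 2) := by
  set x := |u - v|
  have hx : 0 ≤ x := abs_nonneg _
  rw [norm_cexp_I_mul_sub_cexp_I_mul]
  calc x ≤ ‖exp (I * ↑(u - v)) - 1‖ + min x (x ^ 3 / 24) := by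
        rw [← min_add_add_left]
        exact le_min (le_add_of_nonneg_left (norm_nonneg _))
          (abs_le_norm_cexp_I_mul_sub_one_add (u - v))
    _ ≤ ‖exp (I * ↑(u - v)) - 1‖ + min x (x ^ 3) := by gcongr; linarith [pow_nonneg hx 3]
    _ ≤ _ := by gcongr; exact min_self_pow_three_le_rpow_three_halves hx
end

section
/- Let 0 < s and N = 2^{j+1} where 2^j sⱼ² = max_{k ≥ j} 2^k sₖ², with sₖ² = Σ_{2^k ≤ |n| < 2^{k+1}} |aₙ|². Then Σ_{n∈ℤ} (min(|n|, N))^{2s} |aₙ|² ≤ (1 + 2^{2s}) Σ_{|n| ≤ N} |n|^{2s} |aₙ|². -/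
/-!
Write `A n = ‖a n‖ ^ 2` and `N = 2 ^ (j + 1)`. Maximality of `2 ^ j * S j` gives
`S (j + 1 + d) ≤ 2 ^ (-(d + 1)) * S j`, so summing the geometric series over the dyadic blocks
beyond `N` shows `∑_{|n| ≥ N} A n ≤ S j`; this is checked on finite partial sums, each of which
lies in finitely many blocks. Hence the terms with `|n| > N` contribute at most `N ^ (2s) * S j`.
On the block `2 ^ j ≤ |n| < N` one has `N ≤ 2 |n|`, so `N ^ (2s) * S j` is in turn at most
`2 ^ (2s) * ∑_{|n| ≤ N} |n| ^ (2s) * A n`.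
-/

open Finset

lemma summable_of_forall_lt_natAbs {g : ℤ → ℝ} (K : ℕ) (hg : ∀ n : ℤ, K < n.natAbs → g n = 0) :
    Summable g :=
  summable_of_ne_finset_zero (s := Icc (-(K : ℤ)) K) fun n hn => hg n <| by
    rw [mem_Icc] at hn
    omega

lemma sum_range_le_of_two_pow_mul_le {S : ℕ → ℝ} {j : ℕ} (hSj : 0 ≤ S j)
    (hj : ∀ k, j ≤ k → (2 : ℝ) ^ k * S k ≤ 2 ^ j * S j) (D : ℕ) :
    ∑ d ∈ range D, S (j + 1 + d) ≤ S j := by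
  have hterm : ∀ d, S (j + 1 + d) ≤ (1 / 2) ^ (d + 1) * S j := fun d => by
    have h := hj (j + (d + 1)) (by omega)
    rw [pow_add, mul_assoc] at h
    rw [one_div_pow, one_div_mul_eq_div, le_div_iff₀ (by positivity), mul_comm,
      show j + 1 + d = j + (d + 1) by omega]
    exact le_of_mul_le_mul_left h (by positivity)
  calc ∑ d ∈ range D, S (j + 1 + d) ≤ ∑ d ∈ range D, (1 / 2) ^ (d + 1) * S j :=
        sum_le_sum fun d _ => hterm d
    _ = (1 / 2) * (∑ d ∈ range D, (1 / 2 : ℝ) ^ d) * S j := by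
        rw [← sum_mul, mul_sum]; simp only [pow_succ']
    _ ≤ S j := by nlinarith [sum_geometric_two_le D]

lemma min_rpow_mul_le_add {x N : ℕ} {p c : ℝ} (hc : 0 ≤ c) :
    ((min x N : ℕ) : ℝ) ^ p * c ≤
      (if x ≤ N then (x : ℝ) ^ p * c else 0) + (N : ℝ) ^ p * (if N ≤ x then c else 0) := by
  rcases le_total x N with h | h
  · rw [min_eq_left h, if_pos h, le_add_iff_nonneg_right]
    exact mul_nonneg (by positivity) (ite_nonneg hc le_rfl)
  · rw [min_eq_right h, if_pos h, le_add_iff_nonneg_left]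
    exact ite_nonneg (mul_nonneg (by positivity) hc) le_rfl

lemma two_pow_succ_rpow_le {p : ℝ} (hp : 0 ≤ p) {j x : ℕ} (hx : 2 ^ j ≤ x) :
    ((2 ^ (j + 1) : ℕ) : ℝ) ^ p ≤ 2 ^ p * (x : ℝ) ^ p := by
  rw [← Real.mul_rpow zero_le_two (Nat.cast_nonneg x)]
  gcongr
  exact_mod_cast (by omega : 2 ^ (j + 1) ≤ 2 * x)

def dyadicAnnulus (f : ℤ → ℝ) (m K : ℕ) (n : ℤ) : ℝ :=
  if 2 ^ m ≤ n.natAbs ∧ n.natAbs < 2 ^ K then f n else 0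

def dyadicTail (f : ℤ → ℝ) (m : ℕ) (n : ℤ) : ℝ :=
  if 2 ^ m ≤ n.natAbs then f n else 0

section Dyadic

variable {f : ℤ → ℝ}

lemma summable_dyadicAnnulus (f : ℤ → ℝ) (m K : ℕ) : Summable (dyadicAnnulus f m K) :=
  summable_of_forall_lt_natAbs (2 ^ K) fun n hn => if_neg fun h => by omega

lemma dyadicAnnulus_nonneg (hf : 0 ≤ f) (m K : ℕ) : 0 ≤ dyadicAnnulus f m K := fun n =>
  ite_nonneg (hf n) le_rfl

lemma dyadicTail_nonneg (hf : 0 ≤ f) (m : ℕ) : 0 ≤ dyadicTail f m := fun n =>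
  ite_nonneg (hf n) le_rfl

lemma tsum_dyadicAnnulus_eq_sum (f : ℤ → ℝ) (m D : ℕ) :
    ∑' n, dyadicAnnulus f m (m + D) n =
      ∑ d ∈ range D, ∑' n, dyadicAnnulus f (m + d) (m + d + 1) n := by
  induction D with
  | zero =>
    rw [sum_range_zero, add_zero]
    exact (tsum_congr fun n => if_neg (by omega)).trans tsum_zero
  | succ D ih =>
    have hsplit : ∀ n, dyadicAnnulus f m (m + D + 1) n =
        dyadicAnnulus f m (m + D) n + dyadicAnnulus f (m + D) (m + D + 1) n := fun n => by
      have : 2 ^ m ≤ 2 ^ (m + D) := Nat.pow_le_pow_right two_pos (by omega)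
      unfold dyadicAnnulus; split_ifs <;> first | omega | simp
    rw [sum_range_succ, ← ih, ← add_assoc, tsum_congr hsplit,
      (summable_dyadicAnnulus f _ _).tsum_add (summable_dyadicAnnulus f _ _)]

/-- A finite set of integers lies in some disc `|n| < 2 ^ (m + D)`, where the tail agrees with
an annulus. -/
lemma sum_dyadicTail_le (hf : 0 ≤ f) {m : ℕ} {c : ℝ}
    (h : ∀ D, ∑' n, dyadicAnnulus f m (m + D) n ≤ c) (u : Finset ℤ) :
    ∑ n ∈ u, dyadicTail f m n ≤ c := by
  obtain ⟨D, hD⟩ : ∃ D, ∀ n ∈ u, n.natAbs < 2 ^ (m + D) :=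
    ⟨u.sup Int.natAbs, fun n hn => (le_sup hn).trans_lt <|
      Nat.lt_two_pow_self.trans_le (Nat.pow_le_pow_right two_pos (by omega))⟩
  calc ∑ n ∈ u, dyadicTail f m n = ∑ n ∈ u, dyadicAnnulus f m (m + D) n :=
        sum_congr rfl fun n hn => by simp [dyadicTail, dyadicAnnulus, hD n hn]
    _ ≤ ∑' n, dyadicAnnulus f m (m + D) n :=
        (summable_dyadicAnnulus f m _).sum_le_tsum u fun n _ => dyadicAnnulus_nonneg hf m _ n
    _ ≤ c := h D

lemma rpow_mul_tsum_dyadicAnnulus_le (hf : 0 ≤ f) {p : ℝ} (hp : 0 ≤ p) (j : ℕ) :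
    ((2 ^ (j + 1) : ℕ) : ℝ) ^ p * ∑' n, dyadicAnnulus f j (j + 1) n ≤
      2 ^ p * ∑' n, (if n.natAbs ≤ 2 ^ (j + 1) then (n.natAbs : ℝ) ^ p * f n else 0) := by
  have hlow : Summable fun n : ℤ =>
      if n.natAbs ≤ 2 ^ (j + 1) then (n.natAbs : ℝ) ^ p * f n else 0 :=
    summable_of_forall_lt_natAbs (2 ^ (j + 1)) fun n hn => if_neg hn.not_ge
  rw [← tsum_mul_left, ← tsum_mul_left]
  refine ((summable_dyadicAnnulus f j _).mul_left _).tsum_le_tsum (fun n => ?_) (hlow.mul_left _)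
  unfold dyadicAnnulus
  split_ifs with hn hn'
  · rw [← mul_assoc]
    exact mul_le_mul_of_nonneg_right (two_pow_succ_rpow_le hp hn.1) (hf n)
  · omega
  · rw [mul_zero]
    exact mul_nonneg (by positivity) (mul_nonneg (by positivity) (hf n))
  · simp

end Dyadic

theorem truncated_sum_le_of_maximal_block_general (s : ℝ) (hs : 0 < s) (a : ℤ → ℂ)
    (S : ℕ → ℝ)
    (hS : ∀ k, S k = ∑' n : ℤ, (if 2 ^ k ≤ n.natAbs ∧ n.natAbs < 2 ^ (k + 1)
                                  then ‖a n‖ ^ 2 else 0))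
    (j : ℕ) (hj : ∀ k, j ≤ k → (2 : ℝ) ^ k * S k ≤ (2 : ℝ) ^ j * S j) :
    ∑' n : ℤ, ((min n.natAbs (2 ^ (j + 1)) : ℕ) : ℝ) ^ (2 * s) * ‖a n‖ ^ 2 ≤
      (1 + 2 ^ (2 * s)) *
        ∑' n : ℤ, (if n.natAbs ≤ 2 ^ (j + 1)
                    then (n.natAbs : ℝ) ^ (2 * s) * ‖a n‖ ^ 2 else 0) := by
  set f : ℤ → ℝ := fun n => ‖a n‖ ^ 2
  have hf : 0 ≤ f := fun n => by positivity
  have hS' : ∀ k, S k = ∑' n, dyadicAnnulus f k (k + 1) n := hS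
  set low : ℤ → ℝ := fun n => if n.natAbs ≤ 2 ^ (j + 1) then (n.natAbs : ℝ) ^ (2 * s) * f n else 0
  set w : ℝ := ((2 ^ (j + 1) : ℕ) : ℝ) ^ (2 * s)
  have hlow : Summable low :=
    summable_of_forall_lt_natAbs (2 ^ (j + 1)) fun n hn => if_neg hn.not_ge
  have htail : ∀ u, ∑ n ∈ u, dyadicTail f (j + 1) n ≤ S j :=
    sum_dyadicTail_le hf fun D => by
      simpa only [tsum_dyadicAnnulus_eq_sum, ← hS'] using sum_range_le_of_two_pow_mul_le
        ((hS' j).symm ▸ tsum_nonneg (dyadicAnnulus_nonneg hf j (j + 1))) hj D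
  have htail_summable := summable_of_sum_le (dyadicTail_nonneg hf _) htail
  have hsplit := hlow.add (htail_summable.mul_left w)
  have hpoint (n : ℤ) : ((min n.natAbs (2 ^ (j + 1)) : ℕ) : ℝ) ^ (2 * s) * f n ≤
      low n + w * dyadicTail f (j + 1) n :=
    min_rpow_mul_le_add (hf n)
  calc ∑' n : ℤ, ((min n.natAbs (2 ^ (j + 1)) : ℕ) : ℝ) ^ (2 * s) * f n
      ≤ ∑' n, (low n + w * dyadicTail f (j + 1) n) :=
        (hsplit.of_nonneg_of_le (fun n => by positivity) hpoint).tsum_le_tsum hpoint hsplit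
    _ = ∑' n, low n + w * ∑' n, dyadicTail f (j + 1) n := by
        rw [hlow.tsum_add (htail_summable.mul_left w), tsum_mul_left]
    _ ≤ ∑' n, low n + w * S j := by
        gcongr; exact Real.tsum_le_of_sum_le (dyadicTail_nonneg hf _) htail
    _ ≤ ∑' n, low n + 2 ^ (2 * s) * ∑' n, low n := by
        rw [hS' j]
        exact add_le_add le_rfl (rpow_mul_tsum_dyadicAnnulus_le hf (by positivity) j)
    _ = (1 + 2 ^ (2 * s)) * ∑' n, low n := by ring

theorem truncated_sum_le_of_maximal_block (s : ℝ) (hs : 0 < s) (a : ℤ → ℂ)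
    (hsum : Summable (fun n : ℤ => (n.natAbs : ℝ) * ‖a n‖ ^ 2))
    (S : ℕ → ℝ)
    (hS : ∀ k, S k = ∑' n : ℤ, (if 2 ^ k ≤ n.natAbs ∧ n.natAbs < 2 ^ (k + 1)
                                  then ‖a n‖ ^ 2 else 0))
    (j : ℕ) (hj : ∀ k, j ≤ k → (2 : ℝ) ^ k * S k ≤ (2 : ℝ) ^ j * S j) :
    ∑' n : ℤ, ((min n.natAbs (2 ^ (j + 1)) : ℕ) : ℝ) ^ (2 * s) * ‖a n‖ ^ 2 ≤
      (1 + 2 ^ (2 * s)) *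
        ∑' n : ℤ, (if n.natAbs ≤ 2 ^ (j + 1)
                    then (n.natAbs : ℝ) ^ (2 * s) * ‖a n‖ ^ 2 else 0) :=
  truncated_sum_le_of_maximal_block_general s hs a S hS j hj
end

section
/- Let φ : ℝ → ℝ be continuous and 2π-periodic. For every β > 0 there exists α > 0 such that for all N ≥ 1, ∬ |φ(t₁)−φ(t₂)|³ min(N^{1+2s}, ‖t₁−t₂‖^{−1−2s}) dt₁ dt₂ ≤ c(s) α^{−2s} ‖φ‖_∞³ + β ∬ |φ(t₁)−φ(t₂)|² min(N^{1+2s}, ‖t₁−t₂‖^{−1−2s}) dt₁ dt₂, where 0 < s, ‖t‖ = dist(t, 2πℤ), and ∫ = (1/2π)∫_{−π}^π. -/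
open Real in
/-- distance from `t` to `2πℤ` -/
noncomputable def circleDist (t : ℝ) : ℝ := ⨅ k : ℤ, |t - 2 * π * k|

/-!
Cut the double integral along `‖t₁ - t₂‖ = α`, where `α` comes from uniform continuity of `φ`
on the circle. Where `‖t₁ - t₂‖ < α` we have `|φ t₁ - φ t₂| ≤ β`, so one factor of the cube is
absorbed into `β` times the quadratic integral. Elsewhere the cube is at most `(2‖φ‖_∞)³` and
the weight at most `max(‖t₁ - t₂‖, α)^{-1-2s}`, a function of `t₁ - t₂` alone whose integral
over a period is `O(α^{-2s})`.
-/

open Real Set Function MeasureTheory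

lemma circleDist_eq_norm (t : ℝ) : circleDist t = ‖(t : AddCircle (2 * π))‖ := by
  refine le_antisymm ?_ (le_ciInf fun k => ?_)
  · rw [AddCircle.norm_eq]
    calc circleDist t ≤ |t - 2 * π * (round ((2 * π)⁻¹ * t) : ℤ)| :=
          ciInf_le ⟨0, by rintro _ ⟨k, rfl⟩; positivity⟩ _
      _ = _ := by ring_nf
  · have hk : ((2 * π * k : ℝ) : AddCircle (2 * π)) = 0 :=
      (AddCircle.coe_eq_zero_iff _).2 ⟨k, by rw [zsmul_eq_mul]; ring⟩
    calc ‖(t : AddCircle (2 * π))‖ = ‖((t - 2 * π * k : ℝ) : AddCircle (2 * π))‖ := by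
          rw [AddCircle.coe_sub, hk, sub_zero]
      _ ≤ |t - 2 * π * k| := QuotientAddGroup.norm_mk_le_norm

lemma circleDist_nonneg (t : ℝ) : 0 ≤ circleDist t := by
  rw [circleDist_eq_norm]
  exact norm_nonneg _

lemma continuous_circleDist : Continuous circleDist := by
  rw [funext circleDist_eq_norm]
  exact continuous_norm.comp (AddCircle.continuous_mk' _)

lemma circleDist_periodic : Periodic circleDist (2 * π) := fun t => by
  simp only [circleDist_eq_norm, AddCircle.coe_add_period]

lemma circleDist_eq_abs {t : ℝ} (ht : |t| ≤ π) : circleDist t = |t| := by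
  rw [circleDist_eq_norm, AddCircle.norm_coe_eq_abs_iff _ two_pi_pos.ne', abs_of_pos two_pi_pos]
  linarith

lemma Function.Periodic.exists_forall_circleDist_lt {φ : ℝ → ℝ} (hφ : Continuous φ)
    (hper : Periodic φ (2 * π)) {ε : ℝ} (hε : 0 < ε) :
    ∃ δ > 0, ∀ x y, circleDist (x - y) < δ → |φ x - φ y| < ε := by
  have : Fact (0 < 2 * π) := ⟨two_pi_pos⟩
  have hlift : Continuous hper.lift := continuous_coinduced_dom.mpr hφ
  obtain ⟨δ, hδ, h⟩ := Metric.uniformContinuous_iff.1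
    (CompactSpace.uniformContinuous_of_continuous hlift) ε hε
  refine ⟨δ, hδ, fun x y hxy => ?_⟩
  simpa [Real.dist_eq] using
    @h x y (by rwa [dist_eq_norm, ← AddCircle.coe_sub, ← circleDist_eq_norm])

lemma Function.Periodic.abs_le_ciSup_abs {φ : ℝ → ℝ} {c : ℝ} (hφ : Continuous φ)
    (hper : Periodic φ c) (hc : c ≠ 0) (t : ℝ) : |φ t| ≤ ⨆ t, |φ t| :=
  le_ciSup ((hper.comp abs).isBounded_of_continuous hc (continuous_abs.comp hφ)).bddAbove t

lemma intervalIntegral_neg_eq_two_mul_of_even {f : ℝ → ℝ} (hf : Continuous f)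
    (heven : ∀ u, f (-u) = f u) (a : ℝ) :
    ∫ u in -a..a, f u = 2 * ∫ u in 0..a, f u := by
  have hneg : ∫ u in -a..0, f u = ∫ u in 0..a, f u := by
    simpa [heven] using (intervalIntegral.integral_comp_neg (a := 0) (b := a) f).symm
  rw [← intervalIntegral.integral_add_adjacent_intervals (b := 0) (hf.intervalIntegrable _ _)
    (hf.intervalIntegrable _ _), hneg, two_mul]

lemma integral_rpow_neg_one_add_le {α a p : ℝ} (hα : 0 < α) (hαa : α ≤ a) (hp : 0 < p) :
    ∫ u in α..a, u ^ (-(1 + p)) ≤ α ^ (-p) / p := by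
  have h0 : (0 : ℝ) ∉ uIcc α a := by rw [uIcc_of_le hαa]; exact fun h => hα.not_ge h.1
  rw [integral_rpow (Or.inr ⟨by linarith, h0⟩), show -(1 + p) + 1 = -p by ring, div_neg,
    ← neg_div, neg_sub]
  gcongr
  exact sub_le_self _ (rpow_nonneg (hα.le.trans hαa) _)

lemma integral_max_rpow_le {α a p : ℝ} (hα : 0 < α) (hαa : α ≤ a) (hp : 0 < p) :
    ∫ u in 0..a, max u α ^ (-(1 + p)) ≤ (1 + 1 / p) * α ^ (-p) := by
  have hcont : Continuous fun u : ℝ => max u α ^ (-(1 + p)) :=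
    (continuous_id.max continuous_const).rpow_const
      fun u => Or.inl (hα.trans_le (le_max_right _ _)).ne'
  have hnear : ∫ u in 0..α, max u α ^ (-(1 + p)) = α ^ (-p) := by
    rw [intervalIntegral.integral_congr (g := fun _ => α ^ (-(1 + p))) fun u hu => by
      rw [uIcc_of_le hα.le] at hu; simp only [max_eq_right hu.2]]
    rw [intervalIntegral.integral_const, smul_eq_mul, sub_zero, ← rpow_one_add' hα.le (by linarith)]
    ring_nf
  have hfar : ∫ u in α..a, max u α ^ (-(1 + p)) = ∫ u in α..a, u ^ (-(1 + p)) :=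
    intervalIntegral.integral_congr fun u hu => by
      rw [uIcc_of_le hαa] at hu; simp only [max_eq_left hu.1]
  rw [← intervalIntegral.integral_add_adjacent_intervals (b := α) (hcont.intervalIntegrable _ _)
    (hcont.intervalIntegrable _ _), hnear, hfar]
  have := integral_rpow_neg_one_add_le hα hαa hp
  rw [add_mul, one_mul, one_div_mul_eq_div]
  linarith

lemma integral_max_abs_rpow_le {α a p : ℝ} (hα : 0 < α) (hαa : α ≤ a) (hp : 0 < p) :
    ∫ u in -a..a, max |u| α ^ (-(1 + p)) ≤ 2 * ((1 + 1 / p) * α ^ (-p)) := by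
  have hcont : Continuous fun u : ℝ => max |u| α ^ (-(1 + p)) :=
    (continuous_abs.max continuous_const).rpow_const
      fun u => Or.inl (hα.trans_le (le_max_right _ _)).ne'
  rw [intervalIntegral_neg_eq_two_mul_of_even hcont (fun u => by rw [abs_neg]),
    intervalIntegral.integral_congr (g := fun u => max u α ^ (-(1 + p))) fun u hu => by
      rw [uIcc_of_le (hα.le.trans hαa)] at hu; simp only [abs_of_nonneg hu.1]]
  gcongr
  exact integral_max_rpow_le hα hαa hp

lemma integral_max_circleDist_rpow_le {α p : ℝ} (hα : 0 < α) (hαπ : α ≤ π) (hp : 0 < p) :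
    ∫ u in -π..π, max (circleDist u) α ^ (-(1 + p)) ≤ 2 * ((1 + 1 / p) * α ^ (-p)) := by
  rw [intervalIntegral.integral_congr (g := fun u => max |u| α ^ (-(1 + p))) fun u hu => by
    rw [uIcc_of_le (by linarith [pi_pos])] at hu
    simp only [circleDist_eq_abs (abs_le.2 hu)]]
  exact integral_max_abs_rpow_le hα hαπ hp

section SquareIntegral

variable {a b : ℝ}

local notation "μ[" a ", " b "]" =>
  Measure.prod (volume.restrict (Ioc a b)) (volume.restrict (Ioc a b))

lemma intervalIntegral_intervalIntegral_eq_integral_prod (hab : a ≤ b) {f : ℝ → ℝ → ℝ}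
    (hf : Integrable (uncurry f) μ[a, b]) :
    ∫ x in a..b, ∫ y in a..b, f x y = ∫ z, uncurry f z ∂μ[a, b] := by
  simp only [intervalIntegral.integral_of_le hab]
  exact integral_integral hf

lemma integrable_comp_sub_prod {F : ℝ → ℝ} (hF : Continuous F) :
    Integrable (uncurry fun x y => F (x - y)) μ[a, b] := by
  rw [Measure.prod_restrict, ← Measure.volume_eq_prod]
  exact ((hF.comp (continuous_fst.sub continuous_snd)).continuousOn.integrableOn_compact
    (isCompact_Icc.prod isCompact_Icc)).mono_set (prod_mono Ioc_subset_Icc_self Ioc_subset_Icc_self)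

lemma intervalIntegral_comp_sub_left_of_periodic {F : ℝ → ℝ} (hF : Periodic F (b - a)) (x : ℝ) :
    ∫ y in a..b, F (x - y) = ∫ u in a..b, F u := by
  rw [intervalIntegral.integral_comp_sub_left]
  simpa using hF.intervalIntegral_add_eq (x - b) a

lemma intervalIntegral_intervalIntegral_le_add (hab : a ≤ b) {f g : ℝ → ℝ → ℝ} {F : ℝ → ℝ}
    {β K : ℝ} (hf : Integrable (uncurry f) μ[a, b]) (hg : Integrable (uncurry g) μ[a, b])
    (hF : Continuous F) (hFper : Periodic F (b - a))
    (hfg : ∀ x y, f x y ≤ β * g x y + K * F (x - y)) :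
    ∫ x in a..b, ∫ y in a..b, f x y ≤
      β * (∫ x in a..b, ∫ y in a..b, g x y) + K * ((b - a) * ∫ u in a..b, F u) := by
  have hFsq := integrable_comp_sub_prod (a := a) (b := b) hF
  have hFint : ∫ x in a..b, ∫ y in a..b, F (x - y) = (b - a) * ∫ u in a..b, F u := by
    simp only [intervalIntegral_comp_sub_left_of_periodic hFper, intervalIntegral.integral_const,
      smul_eq_mul]
  rw [← hFint, intervalIntegral_intervalIntegral_eq_integral_prod hab hf,
    intervalIntegral_intervalIntegral_eq_integral_prod hab hg,
    intervalIntegral_intervalIntegral_eq_integral_prod (f := fun x y => F (x - y)) hab hFsq,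
    ← integral_const_mul, ← integral_const_mul, ← integral_add (hg.const_mul β) (hFsq.const_mul K)]
  exact integral_mono hf ((hg.const_mul β).add (hFsq.const_mul K)) fun z => hfg z.1 z.2

end SquareIntegral

lemma pow_three_mul_le_add {d w v β B : ℝ} (hd : 0 ≤ d) (hw : 0 ≤ w) (hv : 0 ≤ v) (hβ : 0 ≤ β)
    (hdB : d ≤ B) (h : d ≤ β ∨ w ≤ v) : d ^ 3 * w ≤ β * (d ^ 2 * w) + B ^ 3 * v := by
  rcases h with hdβ | hwv
  · have : d ^ 3 * w ≤ β * (d ^ 2 * w) := by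
      rw [pow_succ, mul_comm _ d, mul_assoc]; gcongr
    have : 0 ≤ B ^ 3 * v := mul_nonneg (pow_nonneg (hd.trans hdB) 3) hv
    linarith
  · have hB := hd.trans hdB
    have : d ^ 3 * w ≤ B ^ 3 * v := by gcongr
    have : 0 ≤ β * (d ^ 2 * w) := by positivity
    linarith

lemma integrable_abs_sub_pow_mul {μ : Measure (ℝ × ℝ)} [IsFiniteMeasure μ] {φ w : ℝ → ℝ} {M C : ℝ}
    (hφ : Continuous φ) (hφM : ∀ t, |φ t| ≤ M) (hw : Measurable w) (hwC : ∀ u, |w u| ≤ C)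
    (n : ℕ) : Integrable (uncurry fun x y => |φ x - φ y| ^ n * w (x - y)) μ := by
  have hmeas : Measurable (uncurry fun x y => |φ x - φ y| ^ n * w (x - y)) :=
    (((hφ.comp continuous_fst).sub (hφ.comp continuous_snd)).abs.measurable.pow_const n).mul
      (hw.comp (measurable_fst.sub measurable_snd))
  refine Integrable.of_bound hmeas.aestronglyMeasurable ((2 * M) ^ n * C)
    (ae_of_all _ fun z => ?_)
  have hΔ : |φ z.1 - φ z.2| ≤ 2 * M := by linarith [abs_sub (φ z.1) (φ z.2), hφM z.1, hφM z.2]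
  show ‖|φ z.1 - φ z.2| ^ n * w (z.1 - z.2)‖ ≤ _
  rw [norm_mul, norm_pow, Real.norm_eq_abs, Real.norm_eq_abs, abs_abs]
  exact mul_le_mul (pow_le_pow_left₀ (abs_nonneg _) hΔ n) (hwC _) (abs_nonneg _)
    (pow_nonneg ((abs_nonneg _).trans hΔ) n)

lemma intervalIntegral_abs_sub_cube_mul_le {φ w : ℝ → ℝ} {α β M C p : ℝ} (hφ : Continuous φ)
    (hM : ∀ t, |φ t| ≤ M) (hα : 0 < α) (hβ : 0 ≤ β)
    (hnear : ∀ x y, circleDist (x - y) < α → |φ x - φ y| ≤ β)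
    (hw : Measurable w) (hw0 : ∀ u, 0 ≤ w u) (hwC : ∀ u, w u ≤ C)
    (hwfar : ∀ u, α ≤ circleDist u → w u ≤ circleDist u ^ (-(1 + p))) :
    ∫ x in -π..π, ∫ y in -π..π, |φ x - φ y| ^ 3 * w (x - y) ≤
      β * (∫ x in -π..π, ∫ y in -π..π, |φ x - φ y| ^ 2 * w (x - y)) +
        (2 * M) ^ 3 * (2 * π * ∫ u in -π..π, max (circleDist u) α ^ (-(1 + p))) := by
  set F : ℝ → ℝ := fun u => max (circleDist u) α ^ (-(1 + p))
  have hF : Continuous F := (continuous_circleDist.max continuous_const).rpow_const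
    fun u => Or.inl (hα.trans_le (le_max_right _ _)).ne'
  have hFper : Periodic F (π - -π) := by
    rw [show π - -π = 2 * π by ring]
    intro u
    simp only [F, circleDist_periodic u]
  have hwC' (u : ℝ) : |w u| ≤ C := (abs_of_nonneg (hw0 u)).trans_le (hwC u)
  have hpt (x y : ℝ) : |φ x - φ y| ^ 3 * w (x - y) ≤
      β * (|φ x - φ y| ^ 2 * w (x - y)) + (2 * M) ^ 3 * F (x - y) := by
    refine pow_three_mul_le_add (abs_nonneg _) (hw0 _) (by positivity) hβ
      (by linarith [abs_sub (φ x) (φ y), hM x, hM y]) ?_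
    rcases lt_or_ge (circleDist (x - y)) α with hclose | hfar
    · exact Or.inl (hnear x y hclose)
    · exact Or.inr (by simpa only [F, max_eq_left hfar] using hwfar _ hfar)
  rw [show 2 * π = π - -π by ring]
  exact intervalIntegral_intervalIntegral_le_add (by linarith [pi_pos])
    (integrable_abs_sub_pow_mul hφ hM hw hwC' 3) (integrable_abs_sub_pow_mul hφ hM hw hwC' 2)
    hF hFper hpt

open Real in
theorem cubic_integral_absorption (s : ℝ) (hs : 0 < s) :
    ∃ c : ℝ, 0 < c ∧
      ∀ (φ : ℝ → ℝ), Continuous φ → (∀ t, φ (t + 2 * π) = φ t) →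
        ∀ β : ℝ, 0 < β → ∃ α : ℝ, 0 < α ∧ ∀ N : ℕ, 1 ≤ N →
          (1 / (2 * π)) ^ 2 * (∫ t₁ in (-π)..π, ∫ t₂ in (-π)..π,
              |φ t₁ - φ t₂| ^ 3 *
                min ((N : ℝ) ^ (1 + 2 * s)) (circleDist (t₁ - t₂) ^ (-(1 + 2 * s)))) ≤
            c * α ^ (-(2 * s)) * (⨆ t : ℝ, |φ t|) ^ 3 +
              β * ((1 / (2 * π)) ^ 2 * (∫ t₁ in (-π)..π, ∫ t₂ in (-π)..π,
                |φ t₁ - φ t₂| ^ 2 *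
                  min ((N : ℝ) ^ (1 + 2 * s)) (circleDist (t₁ - t₂) ^ (-(1 + 2 * s))))) := by
  refine ⟨8 * (1 + 1 / (2 * s)) / π, by positivity, fun φ hφ hper β hβ => ?_⟩
  obtain ⟨δ, hδ, hnear⟩ := Periodic.exists_forall_circleDist_lt hφ hper hβ
  set α := min δ π
  have hα : 0 < α := lt_min hδ pi_pos
  refine ⟨α, hα, fun N _ => ?_⟩
  set M := ⨆ t, |φ t|
  have hM : ∀ t, |φ t| ≤ M := Periodic.abs_le_ciSup_abs hφ hper two_pi_pos.ne'
  have hM0 : 0 ≤ M := (abs_nonneg _).trans (hM 0)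
  have key := intervalIntegral_abs_sub_cube_mul_le (p := 2 * s)
    (w := fun u => min ((N : ℝ) ^ (1 + 2 * s)) (circleDist u ^ (-(1 + 2 * s)))) hφ hM hα hβ.le
    (fun x y h => (hnear x y (h.trans_le (min_le_left _ _))).le)
    (measurable_const.min (continuous_circleDist.measurable.pow_const _))
    (fun u => le_min (by positivity) (rpow_nonneg (circleDist_nonneg u) _))
    (fun u => min_le_left _ _) (fun u _ => min_le_right _ _)
  have hI := integral_max_circleDist_rpow_le hα (min_le_right _ _) (by positivity : 0 < 2 * s)
  set J := ∫ t₁ in -π..π, ∫ t₂ in -π..π, |φ t₁ - φ t₂| ^ 2 *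
    min ((N : ℝ) ^ (1 + 2 * s)) (circleDist (t₁ - t₂) ^ (-(1 + 2 * s)))
  set I := ∫ u in -π..π, max (circleDist u) α ^ (-(1 + 2 * s))
  calc _ ≤ (1 / (2 * π)) ^ 2 * (β * J + (2 * M) ^ 3 * (2 * π * I)) := by gcongr
    _ = 4 / π * M ^ 3 * I + β * ((1 / (2 * π)) ^ 2 * J) := by field_simp; ring
    _ ≤ 4 / π * M ^ 3 * (2 * ((1 + 1 / (2 * s)) * α ^ (-(2 * s)))) +
        β * ((1 / (2 * π)) ^ 2 * J) := by gcongr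
    _ = _ := by ring
end
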